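/- arXiv:1302.0402 — 2 statements merged into one kernel-verified Lean document; each statement's English description precedes it below -/
import Mathlib

section
/- Let ν be a positive Radon measure on (0,∞) with ∫_{(0,∞)} (1+r)^{−1} ν(dr) < ∞, and define β(p) = p ∫_{(0,∞)} (p+r)^{−1} ν(dr) for complex p with Re p ≥ 0, p ≠ 0. If ν((0,∞)) = ∞, then Re β(p) → ∞ as |p| → ∞ in the closed right half-plane; that is, for every M > 0 there exists R > 0 such that Re β(p) ≥ M whenever Re p ≥ 0 and |p| ≥ R. -/
/-!
For `Re p ≥ 0` and `r ≥ 0` the number `p / (p + r)` has nonnegative real part, and real part at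
least `1/4` once `r ≤ |p|`, because then `|p + r| ≤ 2|p|`. Hence `Re β(p) ≥ ν((0, |p|]) / 4`,
which tends to `ν((0, ∞)) = ∞`. The integral defining `β(p)` converges for `p ≠ 0` since
`|p + r| ≥ max(|p|, r)` is comparable to `1 + r`.
-/

open MeasureTheory Set Filter Topology

namespace Complex

lemma normSq_add_ofReal (p : ℂ) (r : ℝ) :
    normSq (p + r) = normSq p + 2 * r * p.re + r ^ 2 := by
  simp only [normSq_apply, add_re, add_im, ofReal_re, ofReal_im]
  ring

lemma norm_le_norm_add_ofReal {p : ℂ} (hp : 0 ≤ p.re) {r : ℝ} (hr : 0 ≤ r) :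
    ‖p‖ ≤ ‖p + r‖ := by
  rw [← sq_le_sq₀ (norm_nonneg _) (norm_nonneg _), ← normSq_eq_norm_sq, ← normSq_eq_norm_sq,
    normSq_add_ofReal]
  nlinarith

lemma le_norm_add_ofReal {p : ℂ} (hp : 0 ≤ p.re) {r : ℝ} (hr : 0 ≤ r) :
    r ≤ ‖p + r‖ := by
  rw [← sq_le_sq₀ hr (norm_nonneg _), ← normSq_eq_norm_sq, normSq_add_ofReal]
  nlinarith [normSq_nonneg p]

lemma re_mul_inv_add_ofReal (p : ℂ) (r : ℝ) :
    (p * (p + r)⁻¹).re = (normSq p + r * p.re) / normSq (p + r) := by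
  rw [← div_eq_mul_inv, div_re, normSq_apply p]
  simp only [add_re, add_im, ofReal_re, ofReal_im]
  ring

lemma re_mul_inv_add_ofReal_nonneg {p : ℂ} (hp : 0 ≤ p.re) {r : ℝ} (hr : 0 ≤ r) :
    0 ≤ (p * (p + r)⁻¹).re := by
  rw [re_mul_inv_add_ofReal]
  exact div_nonneg (add_nonneg (normSq_nonneg p) (mul_nonneg hr hp)) (normSq_nonneg _)

lemma one_le_four_mul_re_mul_inv_add_ofReal {p : ℂ} (hp : 0 ≤ p.re) (hp0 : p ≠ 0) {r : ℝ}
    (hr : 0 ≤ r) (hrp : r ≤ ‖p‖) :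
    1 ≤ 4 * (p * (p + r)⁻¹).re := by
  have hden : 0 < normSq (p + r) := by
    rw [normSq_pos]
    exact norm_pos_iff.1 ((norm_pos_iff.2 hp0).trans_le (norm_le_norm_add_ofReal hp hr))
  rw [re_mul_inv_add_ofReal, mul_div_assoc', le_div_iff₀ hden, normSq_add_ofReal,
    normSq_eq_norm_sq p]
  nlinarith [mul_nonneg hr hp]

lemma norm_inv_add_ofReal_le {p : ℂ} (hp : 0 ≤ p.re) (hp0 : p ≠ 0) {r : ℝ} (hr : 0 ≤ r) :
    ‖(p + r)⁻¹‖ ≤ 2 / min ‖p‖ 1 * (1 + r)⁻¹ := by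
  have hc : 0 < min ‖p‖ 1 := lt_min (norm_pos_iff.2 hp0) one_pos
  have hle : min ‖p‖ 1 * (1 + r) ≤ 2 * ‖p + r‖ := by
    nlinarith [min_le_left ‖p‖ 1, min_le_right ‖p‖ 1, norm_le_norm_add_ofReal hp hr,
      le_norm_add_ofReal hp hr]
  rw [norm_inv, div_mul_eq_mul_div, ← div_eq_mul_inv, div_div]
  refine inv_le_of_inv_le₀ (by positivity) ?_
  rw [inv_div]
  exact div_le_of_le_mul₀ zero_le_two (norm_nonneg _) (by linarith)

end Complex

section

variable {μ : Measure ℝ}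

lemma integrable_inv_add_ofReal (hμ : ∀ᵐ r ∂μ, 0 ≤ r)
    (h : Integrable (fun r : ℝ => (1 + r)⁻¹) μ) {p : ℂ} (hp : 0 ≤ p.re) (hp0 : p ≠ 0) :
    Integrable (fun r : ℝ => (p + r)⁻¹) μ := by
  refine (h.const_mul (2 / min ‖p‖ 1)).mono' (by fun_prop) ?_
  filter_upwards [hμ] with r hr
  exact Complex.norm_inv_add_ofReal_le hp hp0 hr

lemma measure_Iic_norm_le_ofReal_four_mul_integral (hμ : ∀ᵐ r ∂μ, 0 ≤ r) {p : ℂ}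
    (hp : 0 ≤ p.re) (hp0 : p ≠ 0) (hint : Integrable (fun r : ℝ => (p + r)⁻¹) μ) :
    μ (Iic ‖p‖) ≤ ENNReal.ofReal (4 * ∫ r, (p * (p + r)⁻¹).re ∂μ) := by
  have hnonneg : ∀ᵐ r : ℝ ∂μ, 0 ≤ 4 * (p * (p + r)⁻¹).re := by
    filter_upwards [hμ] with r hr
    exact mul_nonneg (by norm_num) (Complex.re_mul_inv_add_ofReal_nonneg hp hr)
  have hint_re : Integrable (fun r : ℝ => 4 * (p * (p + r)⁻¹).re) μ :=
    (hint.const_mul p).re.const_mul 4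
  rw [← integral_const_mul, ofReal_integral_eq_lintegral_ofReal hint_re hnonneg]
  calc μ (Iic ‖p‖) = ∫⁻ _ in Iic ‖p‖, 1 ∂μ := (setLIntegral_one _).symm
    _ ≤ ∫⁻ r in Iic ‖p‖, ENNReal.ofReal (4 * (p * (p + r)⁻¹).re) ∂μ := by
      refine setLIntegral_mono_ae' measurableSet_Iic ?_
      filter_upwards [hμ] with r hr hrp
      exact ENNReal.one_le_ofReal.2 (Complex.one_le_four_mul_re_mul_inv_add_ofReal hp hp0 hr hrp)
    _ ≤ _ := setLIntegral_le_lintegral _ _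

end

/-- For the dispersion-attenuation function
`β(p) = p ∫_{(0,∞)} (p+r)⁻¹ ν(dr)` of a positive Radon measure `ν` on `(0,∞)` with
`∫ (1+r)⁻¹ ν(dr) < ∞`: if `ν((0,∞)) = ∞` then `Re β(p) → ∞` as `|p| → ∞` in the closed
right half-plane. -/
theorem stmt7 (ν : Measure ℝ)
    (hν : (∫⁻ r in Ioi (0:ℝ), ENNReal.ofReal ((1 + r)⁻¹) ∂ν) < ⊤)
    (β : ℂ → ℂ)
    (hβ : ∀ p : ℂ, β p = p * ∫ r in Ioi (0:ℝ), (p + (r : ℂ))⁻¹ ∂ν)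
    (hinf : ν (Ioi (0:ℝ)) = ⊤) :
    ∀ M > (0:ℝ), ∃ R > (0:ℝ), ∀ p : ℂ, 0 ≤ p.re → R ≤ ‖p‖ →
      M ≤ (β p).re := by
  intro M hM
  set μ := ν.restrict (Ioi 0)
  have hμ : ∀ᵐ r ∂μ, 0 ≤ r :=
    ae_restrict_of_forall_mem measurableSet_Ioi fun _ hr => le_of_lt hr
  have hint : Integrable (fun r : ℝ => (1 + r)⁻¹) μ := by
    refine ⟨by fun_prop, (hasFiniteIntegral_iff_ofReal ?_).2 hν⟩
    filter_upwards [hμ] with r hr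
    positivity
  have hμ_top : Tendsto (fun T => μ (Iic T)) atTop (𝓝 ⊤) := by
    simpa [μ, hinf] using tendsto_measure_Iic_atTop μ
  obtain ⟨R, hR, hR0⟩ := ((hμ_top.eventually (eventually_gt_nhds
    (ENNReal.ofReal_lt_top (r := 4 * M)))).and (eventually_gt_atTop 0)).exists
  refine ⟨R, hR0, fun p hp hRp => ?_⟩
  have hp0 : p ≠ 0 := norm_pos_iff.1 (hR0.trans_le hRp)
  have hintp := integrable_inv_add_ofReal hμ hint hp hp0
  have hβ_re : (β p).re = ∫ r, (p * (p + r)⁻¹).re ∂μ := by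
    rw [hβ, ← integral_const_mul]
    exact (integral_re (hintp.const_mul p)).symm
  have h4M : ENNReal.ofReal (4 * M) ≤ ENNReal.ofReal (4 * (β p).re) := calc
    ENNReal.ofReal (4 * M) ≤ μ (Iic R) := hR.le
    _ ≤ μ (Iic ‖p‖) := measure_mono (Iic_subset_Iic.2 hRp)
    _ ≤ _ := hβ_re ▸ measure_Iic_norm_le_ofReal_four_mul_integral hμ hp hp0 hintp
  rcases ENNReal.ofReal_le_ofReal_iff'.1 h4M with h | h <;> linarith
end

section
/- Let ρ > 0 and let μ be a nonzero positive Radon measure on [0,∞) with ∫_{[0,∞)} (1+r)^{−1} μ(dr) < ∞ and μ({0}) > 0 (i.e., the equilibrium modulus G∞ = μ({0}) is positive). Define Q(p) = p ∫_{[0,∞)} (p+r)^{−1} μ(dr) and κ(p) = ρ^{1/2} p / Q(p)^{1/2} (principal square root) for Re p ≥ 0, p ≠ 0. Then the attenuation function A(ω) = Re κ(−iω) satisfies lim_{ω→0+} A(ω)/ω = 0, and the reciprocal phase speed 1/c(ω) = −Im κ(−iω)/ω has the finite limit lim_{ω→0+} 1/c(ω) = (ρ/μ({0}))^{1/2} =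 1/c₀. -/
/-!
As `p → 0` in the closed right half-plane, `p (p + r)⁻¹ → 𝟙{r = 0}` pointwise with
`‖p (p + r)⁻¹‖ ≤ 2 (1 + r)⁻¹`, so dominated convergence gives `Q(p) → μ{0} = G∞ > 0`.
Hence `κ(-iω)/ω = -i √ρ / Q(-iω)^{1/2} → -i √(ρ/G∞)`, whose real part is `0` and whose
negated imaginary part is `√(ρ/G∞)`.
-/

open MeasureTheory Set Filter Topology

namespace Complex

lemma norm_le_norm_add_ofReal_s15 {z : ℂ} (hz : 0 ≤ z.re) {r : ℝ} (hr : 0 ≤ r) :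
    ‖z‖ ≤ ‖z + r‖ := by
  rw [norm_def, norm_def]
  apply Real.sqrt_le_sqrt
  simp only [normSq_apply, add_re, ofReal_re, add_im, ofReal_im, add_zero]
  nlinarith

lemma le_norm_add_ofReal_s15 {z : ℂ} (hz : 0 ≤ z.re) (r : ℝ) : r ≤ ‖z + r‖ :=
  le_trans (by simp [hz]) (re_le_norm _)

lemma norm_mul_inv_add_ofReal_le {z : ℂ} (hz : 0 ≤ z.re) (hz1 : ‖z‖ ≤ 1) {r : ℝ}
    (hr : 0 ≤ r) : ‖z * (z + r)⁻¹‖ ≤ 2 * (1 + r)⁻¹ := by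
  rcases eq_or_ne (z + r) 0 with h | h
  · rw [h, inv_zero, mul_zero, norm_zero]
    positivity
  have h₁ := norm_le_norm_add_ofReal_s15 hz hr
  have h₂ := le_norm_add_ofReal_s15 hz r
  rw [norm_mul, norm_inv, ← div_eq_mul_inv, ← div_eq_mul_inv,
    div_le_div_iff₀ (norm_pos_iff.mpr h) (by linarith)]
  nlinarith [norm_nonneg z]

lemma tendsto_mul_inv_add_ofReal (r : ℝ) :
    Tendsto (fun p : ℂ => p * (p + r)⁻¹) (𝓝[≠] 0)
      (𝓝 (({0} : Set ℝ).indicator (fun _ => 1) r)) := by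
  rcases eq_or_ne r 0 with rfl | hr
  · refine tendsto_const_nhds.congr' ?_
    filter_upwards [self_mem_nhdsWithin] with p hp
    simp [mul_inv_cancel₀ (show p ≠ 0 from hp)]
  · have hcont : ContinuousAt (fun p : ℂ => p * (p + r)⁻¹) 0 :=
      continuousAt_id.mul ((continuousAt_id.add continuousAt_const).inv₀ (by simpa using hr))
    simpa [hr] using hcont.tendsto.mono_left nhdsWithin_le_nhds

end Complex

open Complex

lemma integrable_inv_one_add_of_lintegral_lt_top {μ : Measure ℝ}
    (hμ : ∫⁻ r in Ici (0:ℝ), ENNReal.ofReal ((1 + r)⁻¹) ∂μ < ⊤) :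
    Integrable (fun r : ℝ => (1 + r)⁻¹) (μ.restrict (Ici 0)) := by
  refine ⟨(measurable_const.add measurable_id).inv.aestronglyMeasurable, ?_⟩
  rw [hasFiniteIntegral_iff_ofReal]
  · exact hμ
  · refine (ae_restrict_iff' measurableSet_Ici).2 (ae_of_all _ fun r (hr : 0 ≤ r) => ?_)
    positivity

lemma measure_singleton_zero_lt_top_of_lintegral_lt_top {μ : Measure ℝ}
    (hμ : ∫⁻ r in Ici (0:ℝ), ENNReal.ofReal ((1 + r)⁻¹) ∂μ < ⊤) : μ {0} < ⊤ := by
  refine lt_of_le_of_lt ?_ hμ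
  calc μ {0} = ∫⁻ r in {(0:ℝ)}, ENNReal.ofReal ((1 + r)⁻¹) ∂μ := by simp
    _ ≤ _ := lintegral_mono_set (by simp)

lemma tendsto_mul_integral_inv_add {μ : Measure ℝ}
    (hμ : Integrable (fun r : ℝ => (1 + r)⁻¹) (μ.restrict (Ici 0))) :
    Tendsto (fun p : ℂ => p * ∫ r in Ici (0:ℝ), (p + r)⁻¹ ∂μ)
      (𝓝[{p | 0 ≤ p.re} \ {0}] 0) (𝓝 (μ.real {0})) := by
  have hlim :
      ∫ r in Ici (0:ℝ), ({0} : Set ℝ).indicator (fun _ => (1 : ℂ)) r ∂μ = μ.real {0} := by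
    rw [integral_indicator_const _ (measurableSet_singleton 0), measureReal_restrict_apply
      (measurableSet_singleton 0), inter_eq_left.mpr (by simp)]
    simp
  have hsub : 𝓝[{p : ℂ | 0 ≤ p.re} \ {0}] 0 ≤ 𝓝[≠] 0 :=
    nhdsWithin_mono _ fun _ hp => hp.2
  have hsmall : ∀ᶠ p in 𝓝[{p : ℂ | 0 ≤ p.re} \ {0}] 0, 0 ≤ p.re ∧ ‖p‖ ≤ 1 := by
    filter_upwards [self_mem_nhdsWithin,
      nhdsWithin_le_nhds (Metric.closedBall_mem_nhds (0 : ℂ) one_pos)] with p hp hp1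
    exact ⟨hp.1, by simpa using hp1⟩
  simp_rw [← integral_const_mul]
  rw [← hlim]
  refine tendsto_integral_filter_of_dominated_convergence (fun r => 2 * (1 + r)⁻¹)
    (Eventually.of_forall fun p => ?_) ?_ (hμ.const_mul 2) ?_
  · exact (measurable_const.mul
      (measurable_const.add Complex.measurable_ofReal).inv).aestronglyMeasurable
  · filter_upwards [hsmall] with p ⟨hre, hp1⟩
    exact (ae_restrict_iff' measurableSet_Ici).2 (ae_of_all _ fun r (hr : 0 ≤ r) =>
      norm_mul_inv_add_ofReal_le hre hp1 hr)
  · exact ae_of_all _ fun r => (tendsto_mul_inv_add_ofReal r).mono_left hsub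

lemma tendsto_neg_ofReal_mul_I :
    Tendsto (fun ω : ℝ => -((ω : ℂ) * I)) (𝓝[>] 0) (𝓝[{p | 0 ≤ p.re} \ {0}] 0) := by
  refine tendsto_nhdsWithin_iff.mpr ⟨?_, ?_⟩
  · have hc : Continuous fun ω : ℝ => -((ω : ℂ) * I) := by fun_prop
    simpa using (hc.tendsto 0).mono_left nhdsWithin_le_nhds
  · filter_upwards [self_mem_nhdsWithin] with ω (hω : 0 < ω)
    simp [hω.ne']

theorem stmt15_general (ρ : ℝ) (μ : Measure ℝ)
    (hμ : (∫⁻ r in Ici (0:ℝ), ENNReal.ofReal ((1 + r)⁻¹) ∂μ) < ⊤)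
    (h0 : μ {(0:ℝ)} ≠ 0)
    (Q κ : ℂ → ℂ)
    (hQ : ∀ p : ℂ, Q p = p * ∫ r in Ici (0:ℝ), (p + (r : ℂ))⁻¹ ∂μ)
    (hκ : ∀ p : ℂ, κ p = (Real.sqrt ρ : ℂ) * p / (Q p) ^ ((1:ℂ) / 2)) :
    Tendsto (fun ω : ℝ => (κ (-((ω : ℂ) * Complex.I))).re / ω)
        (nhdsWithin 0 (Ioi 0)) (nhds 0) ∧
      Tendsto (fun ω : ℝ => -(κ (-((ω : ℂ) * Complex.I))).im / ω)
        (nhdsWithin 0 (Ioi 0)) (nhds (Real.sqrt (ρ / (μ {(0:ℝ)}).toReal))) := by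
  rw [← measureReal_def]
  set G := μ.real {0}
  have hG : 0 < G :=
    ENNReal.toReal_pos h0 (measure_singleton_zero_lt_top_of_lintegral_lt_top hμ).ne
  have hQlim : Tendsto (fun ω : ℝ => Q (-(ω * I))) (𝓝[>] 0) (𝓝 G) := by
    simp only [hQ]
    exact (tendsto_mul_integral_inv_add (integrable_inv_one_add_of_lintegral_lt_top hμ)).comp
      tendsto_neg_ofReal_mul_I
  have hsqrt : Tendsto (fun ω : ℝ => Q (-(ω * I)) ^ ((1:ℂ) / 2)) (𝓝[>] 0)
      (𝓝 (Real.sqrt G)) := by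
    have h := (continuousAt_cpow_const (b := 1 / 2) (ofReal_mem_slitPlane.mpr hG)).tendsto.comp
      hQlim
    rwa [Real.sqrt_eq_rpow, ofReal_cpow hG.le, ofReal_div, ofReal_one]
  -- dividing by `ω` cancels the factor `p = -iω` of `κ(p)`
  have hκlim : Tendsto (fun ω : ℝ => κ (-(ω * I)) / ω) (𝓝[>] 0)
      (𝓝 (Real.sqrt ρ * -I / Real.sqrt G)) := by
    have hne : (Real.sqrt G : ℂ) ≠ 0 := by exact_mod_cast (Real.sqrt_pos.mpr hG).ne'
    refine (tendsto_const_nhds.div hsqrt hne).congr' ?_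
    filter_upwards [self_mem_nhdsWithin] with ω (hω : 0 < ω)
    have hω' : (ω : ℂ) ≠ 0 := ofReal_ne_zero.mpr hω.ne'
    rw [Pi.div_apply, hκ]
    field_simp
  constructor
  · simpa [Function.comp_def, div_ofReal_re] using (continuous_re.tendsto _).comp hκlim
  · simpa [Function.comp_def, div_ofReal_im, neg_div, Real.sqrt_div' ρ hG.le] using
      ((continuous_im.tendsto _).comp hκlim).neg

/-- Let `ρ > 0` and let `μ` be a nonzero positive Radon measure on `[0,∞)`
with `∫ (1+r)⁻¹ μ(dr) < ∞` and `μ({0}) > 0` (positive equilibrium modulus `G∞ = μ({0})`).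
With `Q(p) = p ∫ (p+r)⁻¹ μ(dr)` and `κ(p) = √ρ p / Q(p)^{1/2}` (principal branch), the
attenuation `A(ω) = Re κ(−iω)` satisfies `A(ω)/ω → 0` as `ω → 0+`, and the reciprocal phase
speed `1/c(ω) = −Im κ(−iω)/ω` tends to `(ρ/μ({0}))^{1/2} = 1/c₀` as `ω → 0+`. -/
theorem stmt15 (ρ : ℝ) (hρ : 0 < ρ) (μ : Measure ℝ)
    (hμ : (∫⁻ r in Ici (0:ℝ), ENNReal.ofReal ((1 + r)⁻¹) ∂μ) < ⊤)
    (h0 : μ {(0:ℝ)} ≠ 0)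
    (Q κ : ℂ → ℂ)
    (hQ : ∀ p : ℂ, Q p = p * ∫ r in Ici (0:ℝ), (p + (r : ℂ))⁻¹ ∂μ)
    (hκ : ∀ p : ℂ, κ p = (Real.sqrt ρ : ℂ) * p / (Q p) ^ ((1:ℂ) / 2)) :
    Tendsto (fun ω : ℝ => (κ (-((ω : ℂ) * Complex.I))).re / ω)
        (nhdsWithin 0 (Ioi 0)) (nhds 0) ∧
      Tendsto (fun ω : ℝ => -(κ (-((ω : ℂ) * Complex.I))).im / ω)
        (nhdsWithin 0 (Ioi 0)) (nhds (Real.sqrt (ρ / (μ {(0:ℝ)}).toReal))) :=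
  stmt15_general ρ μ hμ h0 Q κ hQ hκ
end
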